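/- arXiv:0912.0718 — 5 statements merged into one kernel-verified Lean document; each statement's English description precedes it below -/
import Mathlib

section
/- Let f be a holomorphic function on an open set U ⊆ ℂ with f′ nonvanishing, and define the density ρ_f(z) = 4/e² · |f′(z)|²/(1+|f(z)|²)² (so that ρ_f(dx² + dy²) is a metric). Then Δ ln √(ρ_f) + e² ρ_f = 0 on U, i.e. ρ_f satisfies the Liouville equation. -/
open Complex

noncomputable def reLin (a : ℂ) : ℂ →L[ℝ] ℝ :=
  Complex.reCLM.comp (((ContinuousLinearMap.mul ℂ ℂ) a).restrictScalars ℝ)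

@[simp] lemma reLin_apply (a t : ℂ) : reLin a t = (a * t).re := rfl

lemma core {p q : ℂ → ℂ} {p' q' : ℂ} {w : ℂ} (hp : HasDerivAt p p' w) (hq : HasDerivAt q q' w) :
    HasFDerivAt (fun x => ((starRingEnd ℂ) (p x) * q x).re)
      (reLin (p' * (starRingEnd ℂ) (q w) + (starRingEnd ℂ) (p w) * q')) w := by
  have h1 := hp.hasFDerivAt.restrictScalars ℝ
  have h2 := (Complex.conjCLE.toContinuousLinearMap.hasFDerivAt (x := p w)).comp w h1
  have h3 := hq.hasFDerivAt.restrictScalars ℝ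
  have h4 := h2.mul h3
  have h5 := Complex.reCLM.hasFDerivAt.comp w h4
  refine h5.congr_fderiv ?_
  ext t
  simp [reLin, Complex.mul_re, Complex.add_re, Complex.conj_re, Complex.conj_im,
    Complex.mul_im, Complex.add_im]
  ring

lemma hdiv {N D : ℂ → ℝ} {N' D' : ℂ →L[ℝ] ℝ} {x : ℂ} (hN : HasFDerivAt N N' x)
    (hD : HasFDerivAt D D' x) (hx : D x ≠ 0) :
    HasFDerivAt (fun w => N w / D w) ((D x)⁻¹ • N' - (N x / (D x)^2) • D') x := by
  have hi : HasDerivAt (fun y : ℝ => y⁻¹) (-((D x)^2)⁻¹) (D x) := hasDerivAt_inv hx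
  have h2 := hi.comp_hasFDerivAt x hD
  have h3 := hN.mul h2
  have heq : (fun w => N w / D w) = fun w => N w * (D w)⁻¹ := by
    funext w; rw [div_eq_mul_inv]
  rw [heq]
  refine h3.congr_fderiv ?_
  ext t
  simp only [ContinuousLinearMap.sub_apply, ContinuousLinearMap.add_apply,
    ContinuousLinearMap.smul_apply, smul_eq_mul, Function.comp_apply]
  field_simp
  ring

lemma sq_norm_eq (u : ℂ) : ‖u‖^2 = ((starRingEnd ℂ) u * u).re := by
  simp [Complex.mul_re, Complex.sq_norm, Complex.normSq_apply]

/-- The Euclidean Laplacian ∂²/∂x² + ∂²/∂y² of a function on ℂ ≅ ℝ². -/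
noncomputable def laplacian (ρ : ℂ → ℝ) (z : ℂ) : ℝ :=
  fderiv ℝ (fun w => fderiv ℝ ρ w 1) z 1 +
  fderiv ℝ (fun w => fderiv ℝ ρ w Complex.I) z Complex.I

lemma laplacian_eq {φ A B : ℂ → ℝ} {z : ℂ}
    (hA : (fun w => fderiv ℝ φ w 1) =ᶠ[nhds z] A)
    (hB : (fun w => fderiv ℝ φ w Complex.I) =ᶠ[nhds z] B) :
    laplacian φ z = fderiv ℝ A z 1 + fderiv ℝ B z Complex.I := by
  unfold laplacian
  rw [hA.fderiv_eq, hB.fderiv_eq]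


lemma alg1 (b c : ℂ) (h : b.re^2 + b.im^2 ≠ 0) :
    -(c.re^2 * b.re^2 * ((b.re^2 + b.im^2)^2)⁻¹ * 2)
      - c.re^2 * b.im^2 * ((b.re^2 + b.im^2)^2)⁻¹ * 2
      + c.re^2 * (b.re^2 + b.im^2)⁻¹ * 2
      + (-(c.im^2 * b.re^2 * ((b.re^2 + b.im^2)^2)⁻¹ * 2)
        - c.im^2 * b.im^2 * ((b.re^2 + b.im^2)^2)⁻¹ * 2)
      + c.im^2 * (b.re^2 + b.im^2)⁻¹ * 2 = 0 := by
  field_simp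
  ring

lemma alg2 (a b : ℂ) (h : (1:ℝ) + a.re^2 + a.im^2 ≠ 0) :
    b.re^2 * a.re^2 * (((1:ℝ) + a.re^2 + a.im^2)^2)⁻¹ * 4
      + (b.re^2 * a.im^2 * (((1:ℝ) + a.re^2 + a.im^2)^2)⁻¹ * 4
        - b.re^2 * ((1:ℝ) + a.re^2 + a.im^2)⁻¹ * 4)
      + b.re^2 * (((1:ℝ) + a.re^2 + a.im^2)^2)⁻¹ * 4
      + b.im^2 * a.re^2 * (((1:ℝ) + a.re^2 + a.im^2)^2)⁻¹ * 4
      + (b.im^2 * a.im^2 * (((1:ℝ) + a.re^2 + a.im^2)^2)⁻¹ * 4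
        - b.im^2 * ((1:ℝ) + a.re^2 + a.im^2)⁻¹ * 4)
      + b.im^2 * (((1:ℝ) + a.re^2 + a.im^2)^2)⁻¹ * 4 = 0 := by
  field_simp
  ring

set_option maxHeartbeats 1000000 in
/-- The density ρ_f associated with a holomorphic function f with coupling e
satisfies the Liouville equation Δ ln √ρ_f + e² ρ_f = 0. -/
theorem liouville_density_case_I (e : ℝ) (he : 0 < e) (U : Set ℂ) (hU : IsOpen U)
    (f : ℂ → ℂ) (hf : DifferentiableOn ℂ f U) (hf' : ∀ z ∈ U, deriv f z ≠ 0)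
    (ρ : ℂ → ℝ)
    (hρ : ∀ z, ρ z = 4 / e ^ 2 * ‖deriv f z‖ ^ 2 / (1 + ‖f z‖ ^ 2) ^ 2) :
    ∀ z ∈ U, laplacian (fun w => Real.log (Real.sqrt (ρ w))) z + e ^ 2 * ρ z = 0 := by
  intro z hz
  have he2 : (e:ℝ)^2 ≠ 0 := by positivity
  set g := deriv f with hgdef
  have hfa : AnalyticOnNhd ℂ f U := hf.analyticOnNhd hU
  have hga : AnalyticOnNhd ℂ g U := hfa.deriv
  have hg2a : AnalyticOnNhd ℂ (deriv g) U := hga.deriv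
  have Hf : ∀ w ∈ U, HasDerivAt f (g w) w := fun w hw => ((hfa w hw).differentiableAt).hasDerivAt
  have Hg : ∀ w ∈ U, HasDerivAt g (deriv g w) w :=
    fun w hw => ((hga w hw).differentiableAt).hasDerivAt
  have Hg2 : HasDerivAt (deriv g) (deriv (deriv g) z) z :=
    ((hg2a z hz).differentiableAt).hasDerivAt
  have hn : ∀ w ∈ U, (0:ℝ) < ((starRingEnd ℂ) (g w) * g w).re := by
    intro w hw
    rw [← sq_norm_eq]
    exact pow_pos (norm_pos_iff.mpr (hf' w hw)) 2
  have hs : ∀ w : ℂ, (0:ℝ) < 1 + ((starRingEnd ℂ) (f w) * f w).re := by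
    intro w
    rw [← sq_norm_eq]
    positivity
  set ψ : ℂ → ℝ := fun w => Real.log (4/e^2)/2
      + (1/2) * Real.log (((starRingEnd ℂ) (g w) * g w).re)
      - Real.log (1 + ((starRingEnd ℂ) (f w) * f w).re) with hψdef
  have hρval : ∀ w, ρ w = 4/e^2 * ((starRingEnd ℂ) (g w) * g w).re
      / (1 + ((starRingEnd ℂ) (f w) * f w).re)^2 := by
    intro w; rw [hρ w, sq_norm_eq (g w), sq_norm_eq (f w)]
  have hρpos : ∀ w ∈ U, 0 < ρ w := by
    intro w hw
    rw [hρval w]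
    have h1 := hn w hw
    have h2 := hs w
    positivity
  have hφψ : ∀ w ∈ U, Real.log (Real.sqrt (ρ w)) = ψ w := by
    intro w hw
    have h1 := hn w hw
    have h2 := hs w
    rw [Real.log_sqrt (hρpos w hw).le, hρval w, hψdef]
    rw [Real.log_div (by positivity) (by positivity), Real.log_mul (by positivity) h1.ne',
      Real.log_pow]
    ring
  have hψd : ∀ w ∈ U, HasFDerivAt ψ
      (((1:ℝ)/2) • ((((starRingEnd ℂ) (g w) * g w).re)⁻¹ •
          reLin (deriv g w * (starRingEnd ℂ) (g w) + (starRingEnd ℂ) (g w) * deriv g w))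
        - ((1 + ((starRingEnd ℂ) (f w) * f w).re)⁻¹ •
          reLin (g w * (starRingEnd ℂ) (f w) + (starRingEnd ℂ) (f w) * g w))) w := by
    intro w hw
    have c1 := core (Hg w hw) (Hg w hw)
    have c2 := (core (Hf w hw) (Hf w hw)).const_add 1
    have l1 := c1.log (hn w hw).ne'
    have l2 := c2.log (hs w).ne'
    exact ((l1.const_mul ((1:ℝ)/2)).const_add (Real.log (4/e^2)/2)).sub l2
  have hfeq : ∀ w ∈ U, fderiv ℝ (fun w => Real.log (Real.sqrt (ρ w))) w = fderiv ℝ ψ w := by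
    intro w hw
    exact Filter.EventuallyEq.fderiv_eq
      (Filter.eventuallyEq_of_mem (hU.mem_nhds hw) hφψ)
  set A : ℂ → ℝ := fun w => ((starRingEnd ℂ) (g w) * deriv g w).re
        / ((starRingEnd ℂ) (g w) * g w).re
      - 2 * (((starRingEnd ℂ) (f w) * g w).re / (1 + ((starRingEnd ℂ) (f w) * f w).re))
    with hAdef
  set B : ℂ → ℝ := fun w => ((starRingEnd ℂ) (g w) * (deriv g w * Complex.I)).re
        / ((starRingEnd ℂ) (g w) * g w).re
      - 2 * (((starRingEnd ℂ) (f w) * (g w * Complex.I)).re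
        / (1 + ((starRingEnd ℂ) (f w) * f w).re)) with hBdef
  have hA : (fun w => fderiv ℝ (fun w => Real.log (Real.sqrt (ρ w))) w 1) =ᶠ[nhds z] A := by
    filter_upwards [hU.mem_nhds hz] with w hw
    rw [hfeq w hw, (hψd w hw).fderiv]
    have e1 : (deriv g w * (starRingEnd ℂ) (g w) + (starRingEnd ℂ) (g w) * deriv g w) * 1
        = 2 * ((starRingEnd ℂ) (g w) * deriv g w) := by ring
    have e2 : (g w * (starRingEnd ℂ) (f w) + (starRingEnd ℂ) (f w) * g w) * 1
        = 2 * ((starRingEnd ℂ) (f w) * g w) := by ring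
    simp only [ContinuousLinearMap.sub_apply, ContinuousLinearMap.smul_apply, reLin_apply,
      smul_eq_mul, e1, e2, hAdef]
    have r1 : ((2:ℂ) * ((starRingEnd ℂ) (g w) * deriv g w)).re
        = 2 * ((starRingEnd ℂ) (g w) * deriv g w).re := by simp
    have r2 : ((2:ℂ) * ((starRingEnd ℂ) (f w) * g w)).re
        = 2 * ((starRingEnd ℂ) (f w) * g w).re := by simp
    rw [r1, r2]
    field_simp
  have hB : (fun w => fderiv ℝ (fun w => Real.log (Real.sqrt (ρ w))) w Complex.I)
      =ᶠ[nhds z] B := by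
    filter_upwards [hU.mem_nhds hz] with w hw
    rw [hfeq w hw, (hψd w hw).fderiv]
    have e1 : (deriv g w * (starRingEnd ℂ) (g w) + (starRingEnd ℂ) (g w) * deriv g w) * Complex.I
        = 2 * ((starRingEnd ℂ) (g w) * (deriv g w * Complex.I)) := by ring
    have e2 : (g w * (starRingEnd ℂ) (f w) + (starRingEnd ℂ) (f w) * g w) * Complex.I
        = 2 * ((starRingEnd ℂ) (f w) * (g w * Complex.I)) := by ring
    simp only [ContinuousLinearMap.sub_apply, ContinuousLinearMap.smul_apply, reLin_apply,
      smul_eq_mul, e1, e2, hBdef]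
    have r1 : ((2:ℂ) * ((starRingEnd ℂ) (g w) * (deriv g w * Complex.I))).re
        = 2 * ((starRingEnd ℂ) (g w) * (deriv g w * Complex.I)).re := by simp
    have r2 : ((2:ℂ) * ((starRingEnd ℂ) (f w) * (g w * Complex.I))).re
        = 2 * ((starRingEnd ℂ) (f w) * (g w * Complex.I)).re := by simp
    rw [r1, r2]
    field_simp
  have hAz := (hdiv (core (Hg z hz) Hg2) (core (Hg z hz) (Hg z hz)) (hn z hz).ne').sub
    ((hdiv (core (Hf z hz) (Hg z hz)) ((core (Hf z hz) (Hf z hz)).const_add 1)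
      (hs z).ne').const_mul 2)
  have hBz := (hdiv (core (Hg z hz) (Hg2.mul_const Complex.I))
      (core (Hg z hz) (Hg z hz)) (hn z hz).ne').sub
    ((hdiv (core (Hf z hz) ((Hg z hz).mul_const Complex.I))
      ((core (Hf z hz) (Hf z hz)).const_add 1) (hs z).ne').const_mul 2)
  have hre : e^2 * ρ z = 4 * ((starRingEnd ℂ) (g z) * g z).re
      / (1 + ((starRingEnd ℂ) (f z) * f z).re)^2 := by
    rw [hρval z]; field_simp
  have K1 : ((starRingEnd ℂ) (g z) * g z).re ≠ 0 := (hn z hz).ne'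
  have K2 : (1 + ((starRingEnd ℂ) (f z) * f z).re) ≠ 0 := (hs z).ne'
  rw [laplacian_eq hA hB, (show HasFDerivAt A _ z from hAz).fderiv,
    (show HasFDerivAt B _ z from hBz).fderiv, hre]
  simp only [ContinuousLinearMap.sub_apply, ContinuousLinearMap.smul_apply,
    ContinuousLinearMap.add_apply, reLin_apply, smul_eq_mul]
  clear * - K1 K2
  revert K1 K2
  generalize deriv (deriv g) z = d
  generalize deriv g z = c
  generalize g z = b
  generalize f z = a
  intro K1 K2
  simp only [Complex.mul_re, Complex.mul_im, Complex.add_re, Complex.add_im,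
    Complex.conj_re, Complex.conj_im, Complex.I_re, Complex.I_im, Complex.one_re,
    Complex.one_im] at K1 K2 ⊢
  have n1 : b.re^2 + b.im^2 ≠ 0 := fun h => K1 (by linear_combination h)
  have n2 : (1:ℝ) + a.re^2 + a.im^2 ≠ 0 := fun h => K2 (by linear_combination h)
  ring_nf
  have d1 : b.re ^ 2 * b.im ^ 2 * 2 + b.re ^ 4 + b.im ^ 4 = (b.re^2 + b.im^2)^2 := by ring
  have d3 : 1 + a.re ^ 2 * 2 + a.re ^ 2 * a.im ^ 2 * 2 + a.re ^ 4 + a.im ^ 2 * 2 + a.im ^ 4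
      = ((1:ℝ) + a.re^2 + a.im^2)^2 := by ring
  rw [d1, d3]
  linear_combination alg1 b c n1 + alg2 a b n2
end

section
/- If f : U → ℂ is holomorphic on an open set U and ρ_f(z) = (4/e²)·|f′(z)|²/(1−|f(z)|²)² is defined wherever |f(z)| ≠ 1, then ρ_f satisfies Δ ln √(ρ_f) − e² ρ_f = 0 on the set where f′ ≠ 0 and |f| ≠ 1. -/
/-!
Near a point where `f' ≠ 0` and `|f| ≠ 1`,
`log √ρ_f = log (2/e) + log |f'| - log |1 - |f|²|`. The middle term is harmonic, and the chain rule
`Δ (Φ ∘ N) = Φ''(N) |∇N|² + Φ'(N) ΔN` applied to `N = |f|²`, for which `ΔN = 4 |f'|²` and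
`|∇N|² = 4 |f|² |f'|²`, gives `Δ log |1 - |f|²| = -4 |f'|² / (1 - |f|²)² = -e² ρ_f`.
-/

open Complex Filter Topology InnerProductSpace
open scoped Laplacian ComplexConjugate

lemma ContDiffAt.differentiableAt_fderiv_apply {F : ℂ → ℝ} {z : ℂ} (hF : ContDiffAt ℝ 2 F z)
    (v : ℂ) : DifferentiableAt ℝ (fun w => fderiv ℝ F w v) z :=
  ((hF.fderiv_right (m := 1) le_rfl).differentiableAt one_ne_zero).clm_apply
    (differentiableAt_const v)

lemma ContDiffAt.laplacian_eq_laplacian {F : ℂ → ℝ} {z : ℂ} (hF : ContDiffAt ℝ 2 F z) :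
    laplacian F z = Δ F z := by
  have hF' : DifferentiableAt ℝ (fderiv ℝ F) z :=
    (hF.fderiv_right (m := 1) le_rfl).differentiableAt one_ne_zero
  simp only [laplacian, laplacian_eq_iteratedFDeriv_complexPlane, iteratedFDeriv_two_apply,
    fderiv_clm_apply hF' (differentiableAt_const _)]
  simp

lemma laplacian_comp {N : ℂ → ℝ} {Φ Φ' : ℝ → ℝ} {Φ'' : ℝ} {z : ℂ} (hN : ContDiffAt ℝ 2 N z)
    (hΦ : ∀ᶠ s in 𝓝 (N z), HasDerivAt Φ (Φ' s) s) (hΦ' : HasDerivAt Φ' Φ'' (N z)) :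
    laplacian (Φ ∘ N) z =
      Φ'' * (fderiv ℝ N z 1 ^ 2 + fderiv ℝ N z I ^ 2) + Φ' (N z) * laplacian N z := by
  have hN_diff : ∀ᶠ w in 𝓝 z, DifferentiableAt ℝ N w :=
    (hN.eventually (by simp)).mono fun w hw => hw.differentiableAt two_ne_zero
  have hΦN : ∀ᶠ w in 𝓝 z, HasDerivAt Φ (Φ' (N w)) (N w) :=
    hN.continuousAt.tendsto.eventually hΦ
  have first (v : ℂ) : (fun w => fderiv ℝ (Φ ∘ N) w v) =ᶠ[𝓝 z]
      fun w => Φ' (N w) * fderiv ℝ N w v := by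
    filter_upwards [hN_diff, hΦN] with w hNw hΦw
    rw [(hΦw.comp_hasFDerivAt w hNw.hasFDerivAt).fderiv]
    simp
  have second (v : ℂ) : HasFDerivAt (fun w => Φ' (N w) * fderiv ℝ N w v)
      (Φ' (N z) • fderiv ℝ (fun w => fderiv ℝ N w v) z +
        fderiv ℝ N z v • Φ'' • fderiv ℝ N z) z :=
    (hΦ'.comp_hasFDerivAt z (hN.differentiableAt two_ne_zero).hasFDerivAt).mul
      (hN.differentiableAt_fderiv_apply v).hasFDerivAt
  rw [laplacian, laplacian, (first 1).fderiv_eq, (first I).fderiv_eq, (second 1).fderiv,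
    (second I).fderiv]
  simp only [add_apply, smul_apply, smul_eq_mul]
  ring

section NormSqComp

variable {g : ℂ → ℂ} {z : ℂ}

lemma AnalyticAt.contDiffAt_norm_sq (hg : AnalyticAt ℂ g z) :
    ContDiffAt ℝ 2 (fun w => ‖g w‖ ^ 2) z :=
  (contDiff_norm_sq ℝ).contDiffAt.comp z (hg.contDiffAt.restrict_scalars ℝ)

lemma fderiv_norm_sq_comp_apply (hg : DifferentiableAt ℂ g z) (v : ℂ) :
    fderiv ℝ (fun w => ‖g w‖ ^ 2) z v = 2 * (conj (g z) * deriv g z * v).re := by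
  rw [(hg.hasDerivAt.hasFDerivAt.restrictScalars ℝ).norm_sq.fderiv]
  simp only [smul_apply, ContinuousLinearMap.comp_apply, ContinuousLinearMap.coe_restrictScalars',
    ContinuousLinearMap.toSpanSingleton_apply, smul_eq_mul, coe_innerSL_apply, Complex.inner,
    mul_re, conj_re, mul_im, conj_im]
  ring

lemma laplacian_norm_sq_comp (hg : AnalyticAt ℂ g z) :
    laplacian (fun w => ‖g w‖ ^ 2) z = 4 * ‖deriv g z‖ ^ 2 := by
  have first (v : ℂ) : (fun w => fderiv ℝ (fun w => ‖g w‖ ^ 2) w v) =ᶠ[𝓝 z]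
      fun w => 2 * (conj (g w) * deriv g w * v).re := by
    filter_upwards [hg.eventually_analyticAt] with w hw
    exact fderiv_norm_sq_comp_apply hw.differentiableAt v
  have second (v : ℂ) := (reCLM.hasFDerivAt.comp z
    ((((hg.differentiableAt.hasDerivAt.hasFDerivAt.restrictScalars ℝ).star).mul
      (hg.deriv.differentiableAt.hasDerivAt.hasFDerivAt.restrictScalars ℝ)).mul_const v)).const_mul
      (2 : ℝ)
  rw [laplacian, (first 1).fderiv_eq.trans (second 1).fderiv,
    (first I).fderiv_eq.trans (second I).fderiv]
  simp only [add_apply, smul_apply, ContinuousLinearMap.comp_apply, smul_eq_mul, reCLM_apply,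
    ContinuousLinearMap.coe_restrictScalars', ContinuousLinearMap.toSpanSingleton_apply,
    ContinuousLinearEquiv.coe_coe, starL'_apply, one_mul, star_mul', RCLike.star_def, conj_I,
    add_re, add_im, mul_re, mul_im, conj_re, conj_im, I_re, I_im, neg_re, neg_im, Complex.sq_norm,
    normSq_apply]
  ring

/-- `Real.log` is even, so this covers both signs of `c - ‖g z‖ ^ 2`. -/
lemma laplacian_log_sub_norm_sq_comp {c : ℝ} (hg : AnalyticAt ℂ g z) (hc : ‖g z‖ ^ 2 ≠ c) :
    laplacian (fun w => Real.log (c - ‖g w‖ ^ 2)) z =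
      -4 * c * ‖deriv g z‖ ^ 2 / (c - ‖g z‖ ^ 2) ^ 2 := by
  have hΦ : ∀ᶠ s in 𝓝 (‖g z‖ ^ 2), HasDerivAt (fun s => Real.log (c - s)) (s - c)⁻¹ s := by
    filter_upwards [eventually_ne_nhds hc] with s hs
    refine (((hasDerivAt_id' s).const_sub c).log (sub_ne_zero.2 hs.symm)).congr_deriv ?_
    rw [neg_div, ← div_neg, neg_sub, one_div]
  have hΦ' : HasDerivAt (fun s => (s - c)⁻¹) (-1 / (‖g z‖ ^ 2 - c) ^ 2) (‖g z‖ ^ 2) :=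
    ((hasDerivAt_id' _).sub_const c).inv (sub_ne_zero.2 hc)
  have grad : fderiv ℝ (fun w => ‖g w‖ ^ 2) z 1 ^ 2 + fderiv ℝ (fun w => ‖g w‖ ^ 2) z I ^ 2 =
      4 * ‖g z‖ ^ 2 * ‖deriv g z‖ ^ 2 := by
    rw [fderiv_norm_sq_comp_apply hg.differentiableAt,
      fderiv_norm_sq_comp_apply hg.differentiableAt]
    simp only [Complex.sq_norm, normSq_apply, mul_re, mul_im, conj_re, conj_im, one_re, one_im,
      I_re, I_im]
    ring
  rw [show (fun w => Real.log (c - ‖g w‖ ^ 2)) = (fun s => Real.log (c - s)) ∘ fun w => ‖g w‖ ^ 2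
    from rfl, laplacian_comp hg.contDiffAt_norm_sq hΦ hΦ', grad, laplacian_norm_sq_comp hg]
  have : c - ‖g z‖ ^ 2 ≠ 0 := sub_ne_zero.2 hc.symm
  field_simp
  ring

end NormSqComp

lemma Real.log_sqrt_four_div_sq_mul_sq_div_sq {e a t : ℝ} (he : e ≠ 0) (ha : a ≠ 0) (ht : t ≠ 0) :
    Real.log √(4 / e ^ 2 * a ^ 2 / t ^ 2) = Real.log (2 / e) + Real.log a - Real.log t := by
  rw [show 4 / e ^ 2 * a ^ 2 / t ^ 2 = (2 / e * a / t) ^ 2 by ring, Real.sqrt_sq_eq_abs,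
    Real.log_abs, Real.log_div (by positivity) ht, Real.log_mul (by positivity) ha]

/-- The density ρ_f = (4/e²)|f′|²/(1−|f|²)² associated with a holomorphic function f
satisfies Δ ln √ρ_f − e² ρ_f = 0 on the set where f′ ≠ 0 and |f| ≠ 1. -/
theorem liouville_density_case_II (e : ℝ) (he : 0 < e) (U : Set ℂ) (hU : IsOpen U)
    (f : ℂ → ℂ) (hf : DifferentiableOn ℂ f U)
    (ρ : ℂ → ℝ)
    (hρ : ∀ z, ρ z = 4 / e ^ 2 * ‖deriv f z‖ ^ 2 / (1 - ‖f z‖ ^ 2) ^ 2) :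
    ∀ z ∈ U, deriv f z ≠ 0 → ‖f z‖ ≠ 1 →
      laplacian (fun w => Real.log (Real.sqrt (ρ w))) z - e ^ 2 * ρ z = 0 := by
  intro z hz hf' hf_norm
  have hfa : AnalyticAt ℂ f z := hf.analyticAt (hU.mem_nhds hz)
  have hf_norm_sq : ‖f z‖ ^ 2 ≠ 1 := by
    rwa [Ne, pow_eq_one_iff_of_nonneg (norm_nonneg _) two_ne_zero]
  set A : ℂ → ℝ := fun w => Real.log ‖deriv f w‖
  set B : ℂ → ℝ := fun w => Real.log (1 - ‖f w‖ ^ 2)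
  have hA : HarmonicAt A z := hfa.deriv.harmonicAt_log_norm hf'
  have hB : ContDiffAt ℝ 2 B z :=
    (contDiffAt_const.sub hfa.contDiffAt_norm_sq).log (sub_ne_zero.2 hf_norm_sq.symm)
  have hE : (fun w => Real.log √(ρ w)) =ᶠ[𝓝 z] (fun _ => Real.log (2 / e)) + A - B := by
    filter_upwards [hfa.deriv.continuousAt.norm.eventually_ne (norm_ne_zero_iff.2 hf'),
      hfa.contDiffAt_norm_sq.continuousAt.eventually_ne hf_norm_sq] with w hw₁ hw₂
    rw [hρ, Real.log_sqrt_four_div_sq_mul_sq_div_sq he.ne' hw₁ (sub_ne_zero.2 hw₂.symm)]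
    rfl
  have hconst_add_A : ContDiffAt ℝ 2 ((fun _ => Real.log (2 / e)) + A) z :=
    contDiffAt_const.add hA.1
  rw [((hconst_add_A.sub hB).congr_of_eventuallyEq hE).laplacian_eq_laplacian,
    (laplacian_congr_nhds hE).eq_of_nhds, hconst_add_A.laplacian_sub hB,
    contDiffAt_const.laplacian_add hA.1, laplacian_const, hA.2.eq_of_nhds, Pi.zero_apply,
    ← hB.laplacian_eq_laplacian, laplacian_log_sub_norm_sq_comp hfa hf_norm_sq, hρ]
  field_simp
  ring
end

section
/- There is no smooth function ρ : ℂ → ℝ, doubly periodic with respect to a lattice Ω ⊂ ℂ, with ρ > 0 everywhere, satisfying Δ ln √ρ + e² ρ = 0 for some e ≠ 0. (Any periodic solution must have zeros.) -/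
lemma real_key (g g' : ℝ → ℝ) (c : ℝ) (hg : ∀ t, HasDerivAt g (g' t) t)
    (hg' : HasDerivAt g' c 0) (hmin : ∀ t, g 0 ≤ g t) : 0 ≤ c := by
  by_contra hc
  push_neg at hc
  have h0 : g' 0 = 0 := by
    have hlm : IsLocalMin g 0 := Filter.Eventually.of_forall hmin
    exact hlm.hasDerivAt_eq_zero (hg 0)
  have hslope : Filter.Tendsto (slope g' 0) (nhdsWithin 0 {(0:ℝ)}ᶜ) (nhds c) :=
    hasDerivAt_iff_tendsto_slope.mp hg'
  have h1 : ∀ᶠ t in nhdsWithin 0 {(0:ℝ)}ᶜ, slope g' 0 t < 0 :=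
    hslope.eventually (Filter.eventually_iff_exists_mem.mpr ⟨Set.Iio 0, gt_mem_nhds hc, fun x hx => hx⟩)
  have h2 : ∀ᶠ t in nhdsWithin 0 (Set.Ioi 0), slope g' 0 t < 0 :=
    h1.filter_mono (nhdsWithin_mono _ (fun x hx => ne_of_gt hx))
  obtain ⟨ε, hε, hIoo⟩ := (mem_nhdsGT_iff_exists_Ioo_subset).mp h2
  have hεpos : (0:ℝ) < ε := hε
  have hneg : ∀ x ∈ Set.Ioo (0:ℝ) ε, g' x < 0 := by
    intro x hx
    have hs : (g' x - g' 0) / (x - 0) < 0 := by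
      have := hIoo hx
      simpa [slope_def_field] using this
    rw [h0, sub_zero, sub_zero] at hs
    have := mul_neg_of_neg_of_pos hs hx.1
    rwa [div_mul_cancel₀ _ (ne_of_gt hx.1)] at this
  have hanti : StrictAntiOn g (Set.Icc 0 (ε/2)) := by
    apply strictAntiOn_of_deriv_neg (convex_Icc _ _)
    · exact fun t _ => (hg t).continuousAt.continuousWithinAt
    · intro x hx
      rw [interior_Icc] at hx
      rw [(hg x).deriv]
      exact hneg x ⟨hx.1, lt_trans hx.2 (by linarith)⟩
  have : g (ε/2) < g 0 := hanti ⟨le_refl 0, by linarith⟩ ⟨by linarith, le_refl _⟩ (by linarith)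
  exact absurd (hmin (ε/2)) (not_le.mpr this)

lemma second_deriv_nonneg (u : ℂ → ℝ) (hu : ContDiff ℝ (⊤ : ℕ∞) u) (z₀ v : ℂ)
    (hmin : ∀ z, u z₀ ≤ u z) : 0 ≤ fderiv ℝ (fun w => fderiv ℝ u w v) z₀ v := by
  set F : ℂ → ℝ := fun w => fderiv ℝ u w v with hF
  have hFc : ContDiff ℝ (⊤ : ℕ∞) F := by
    have h1 : ContDiff ℝ (⊤ : ℕ∞) (fderiv ℝ u) := hu.fderiv_right (by simp)
    exact (ContinuousLinearMap.apply ℝ ℝ v).contDiff.comp h1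
  have hL : ∀ t : ℝ, HasDerivAt (fun t : ℝ => z₀ + t • v) v t := by
    intro t
    simpa using ((hasDerivAt_id t).smul_const v).const_add z₀
  set g : ℝ → ℝ := fun t => u (z₀ + t • v) with hgdef
  set g' : ℝ → ℝ := fun t => F (z₀ + t • v) with hg'def
  have hg : ∀ t, HasDerivAt g (g' t) t := fun t =>
    ((hu.differentiable (by simp) (z₀ + t • v)).hasFDerivAt).comp_hasDerivAt t (hL t)
  have hg' : HasDerivAt g' (fderiv ℝ F z₀ v) 0 := by
    have h2 := ((hFc.differentiable (by simp) (z₀ + (0:ℝ) • v)).hasFDerivAt).comp_hasDerivAt 0 (hL 0)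
    rw [zero_smul, add_zero] at h2
    exact h2
  have := real_key g g' (fderiv ℝ F z₀ v) hg hg' (by intro t; simpa [hgdef] using hmin (z₀ + t • v))
  exact this


lemma periodic_exists_min (ω₁ ω₂ : ℂ) (hind : LinearIndependent ℝ ![ω₁, ω₂])
    (u : ℂ → ℝ) (hc : Continuous u)
    (h1 : ∀ z, u (z + ω₁) = u z) (h2 : ∀ z, u (z + ω₂) = u z) :
    ∃ z₀, ∀ z, u z₀ ≤ u z := by
  have hcard : Fintype.card (Fin 2) = Module.finrank ℝ ℂ := by
    simp only [Fintype.card_fin]; exact Complex.finrank_real_complex.symm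
  let b : Module.Basis (Fin 2) ℝ ℂ := basisOfLinearIndependentOfCardEqFinrank hind hcard
  have hb : ⇑b = ![ω₁, ω₂] := coe_basisOfLinearIndependentOfCardEqFinrank hind hcard
  set K : Set ℂ := (fun p : ℝ × ℝ => p.1 • ω₁ + p.2 • ω₂) '' (Set.Icc 0 1 ×ˢ Set.Icc 0 1)
  have hK : IsCompact K := (isCompact_Icc.prod isCompact_Icc).image (by continuity)
  have hKne : K.Nonempty := ⟨(0:ℝ) • ω₁ + (0:ℝ) • ω₂, ⟨(0,0), by norm_num, rfl⟩⟩
  obtain ⟨z₀, hz₀K, hz₀min⟩ := hK.exists_isMinOn hKne hc.continuousOn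
  refine ⟨z₀, fun z => ?_⟩
  set a : ℝ := b.repr z 0
  set c : ℝ := b.repr z 1
  have hz : z = a • ω₁ + c • ω₂ := by
    have := b.sum_repr z
    rw [Fin.sum_univ_two] at this
    rw [← this, hb]
    simp [a, c]
  set w : ℂ := Int.fract a • ω₁ + Int.fract c • ω₂ with hw
  have hwz : z = (w + (⌊c⌋ : ℤ) • ω₂) + (⌊a⌋ : ℤ) • ω₁ := by
    rw [hz, hw]
    rw [← Int.cast_smul_eq_zsmul ℝ, ← Int.cast_smul_eq_zsmul ℝ, ← Int.self_sub_floor, ← Int.self_sub_floor,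
      sub_smul, sub_smul]
    ring
  have hP1 : Function.Periodic u ω₁ := h1
  have hP2 : Function.Periodic u ω₂ := h2
  have huz : u z = u w := by
    rw [hwz, (hP1.zsmul ⌊a⌋) _, (hP2.zsmul ⌊c⌋) _]
  have hwK : w ∈ K := ⟨(Int.fract a, Int.fract c),
    ⟨⟨(Int.fract_nonneg a), (Int.fract_lt_one a).le⟩,
     ⟨(Int.fract_nonneg c), (Int.fract_lt_one c).le⟩⟩, rfl⟩
  rw [huz]
  exact hz₀min hwK

/-- There is no smooth, everywhere positive, doubly periodic solution of the
Liouville equation Δ ln √ρ + e² ρ = 0 on ℂ. -/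
theorem no_positive_periodic_liouville_solution (ω₁ ω₂ : ℂ)
    (hind : LinearIndependent ℝ ![ω₁, ω₂]) :
    ¬ ∃ (ρ : ℂ → ℝ) (e : ℝ), e ≠ 0 ∧ ContDiff ℝ (⊤ : ℕ∞) ρ ∧
      (∀ z, ρ (z + ω₁) = ρ z) ∧ (∀ z, ρ (z + ω₂) = ρ z) ∧
      (∀ z, 0 < ρ z) ∧
      (∀ z, laplacian (fun w => Real.log (Real.sqrt (ρ w))) z + e ^ 2 * ρ z = 0) := by
  rintro ⟨ρ, e, he, hρ, hp1, hp2, hpos, heq⟩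
  set u : ℂ → ℝ := fun w => Real.log (Real.sqrt (ρ w)) with hudef
  have hueq : u = fun w => Real.log (ρ w) / 2 :=
    funext fun w => Real.log_sqrt (hpos w).le
  have hu : ContDiff ℝ (⊤ : ℕ∞) u := by
    rw [hueq]
    rw [contDiff_iff_contDiffAt]
    intro w
    exact ((Real.contDiffAt_log.mpr (hpos w).ne').comp w hρ.contDiffAt).div_const 2
  have hu1 : ∀ z, u (z + ω₁) = u z := fun z => by simp only [hudef, hp1]
  have hu2 : ∀ z, u (z + ω₂) = u z := fun z => by simp only [hudef, hp2]
  obtain ⟨z₀, hmin⟩ := periodic_exists_min ω₁ ω₂ hind u (hu.continuous) hu1 hu2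
  have hA := second_deriv_nonneg u hu z₀ 1 hmin
  have hB := second_deriv_nonneg u hu z₀ Complex.I hmin
  have hsum : laplacian u z₀ + e ^ 2 * ρ z₀ = 0 := heq z₀
  have hlap : laplacian u z₀ =
      fderiv ℝ (fun w => fderiv ℝ u w 1) z₀ 1 +
      fderiv ℝ (fun w => fderiv ℝ u w Complex.I) z₀ Complex.I := rfl
  have hepos : 0 < e ^ 2 * ρ z₀ := mul_pos (by positivity : (0:ℝ) < e ^ 2) (hpos z₀)
  rw [hlap] at hsum
  linarith
end

section
/- Let f be a function holomorphic on a punctured disc D\{z₀} with an isolated singularity at z₀, and suppose the density ρ_f = 4|f′|²/(1+|f|²)² is bounded on D\{z₀}. Then the singularity of f at z₀ is removable or a pole; in particular f extends to a meromorphic function on D. -/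
open Filter Metric Set Topology
open scoped NNReal

/-!
The function `u = (1 + ‖f‖²)⁻¹` satisfies `‖Du‖ ≤ ‖f'‖ / (1 + ‖f‖²) = √ρ_f / 2`, so its gradient is
bounded on the punctured disc. Any two points of a punctured disc are joined inside it by a path of
two segments of length at most three times their distance (detour through a point rotated by a
right angle about the puncture), hence `u` is Lipschitz there and has a limit `L` at `z₀`.
If `L > 0` then `f` is bounded near `z₀` and Riemann's theorem removes the singularity; if `L = 0`
then `‖f‖ → ∞`, so `1 / f` is bounded and `f` has a pole.
-/

theorem HasFDerivAt.exists_inv_one_add_norm_sq {E F : Type*} [NormedAddCommGroup E]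
    [NormedSpace ℝ E] [NormedAddCommGroup F] [InnerProductSpace ℝ F]
    {g : E → F} {g' : E →L[ℝ] F} {x : E}
    (hg : HasFDerivAt g g' x) :
    ∃ D : E →L[ℝ] ℝ, HasFDerivAt (fun y ↦ (1 + ‖g y‖ ^ 2)⁻¹) D x ∧
      ‖D‖ ≤ ‖g'‖ / (1 + ‖g x‖ ^ 2) := by
  set b := 1 + ‖g x‖ ^ 2
  have hb : 0 < b := by positivity
  refine ⟨-(b ^ 2)⁻¹ • (2 • (innerSL ℝ (g x)).comp g'),
    (hasDerivAt_inv hb.ne').comp_hasFDerivAt x (hg.norm_sq.const_add 1), ?_⟩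
  have h2 : 2 * ‖g x‖ ≤ b := by nlinarith [sq_nonneg (‖g x‖ - 1)]
  calc ‖-(b ^ 2)⁻¹ • (2 • (innerSL ℝ (g x)).comp g')‖
      ≤ (b ^ 2)⁻¹ * (2 * (‖g x‖ * ‖g'‖)) := by
        rw [norm_smul, norm_neg, norm_inv, norm_pow, Real.norm_of_nonneg hb.le]
        gcongr
        refine (norm_nsmul_le ..).trans ?_
        simp only [Nat.cast_ofNat]
        gcongr
        exact (ContinuousLinearMap.opNorm_comp_le _ _).trans (by rw [innerSL_apply_norm])
    _ = (b ^ 2)⁻¹ * (2 * ‖g x‖ * ‖g'‖) := by ring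
    _ ≤ (b ^ 2)⁻¹ * (b * ‖g'‖) := by gcongr
    _ = ‖g'‖ / b := by field_simp

theorem DifferentiableAt.norm_fderiv_inv_one_add_norm_sq_le_sqrt {f : ℂ → ℂ} {z : ℂ} {C : ℝ}
    (hf : DifferentiableAt ℂ f z) (hC : 4 * ‖deriv f z‖ ^ 2 / (1 + ‖f z‖ ^ 2) ^ 2 ≤ C) :
    DifferentiableAt ℝ (fun w ↦ (1 + ‖f w‖ ^ 2)⁻¹) z ∧
      ‖fderiv ℝ (fun w ↦ (1 + ‖f w‖ ^ 2)⁻¹) z‖ ≤ √C / 2 := by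
  obtain ⟨D, hD, hDle⟩ := (hf.hasFDerivAt.restrictScalars ℝ).exists_inv_one_add_norm_sq
  refine ⟨hD.differentiableAt, ?_⟩
  rw [ContinuousLinearMap.norm_restrictScalars, ← norm_deriv_eq_norm_fderiv] at hDle
  have hsq : (2 * (‖deriv f z‖ / (1 + ‖f z‖ ^ 2))) ^ 2 ≤ C := by
    calc _ = 4 * ‖deriv f z‖ ^ 2 / (1 + ‖f z‖ ^ 2) ^ 2 := by
          rw [mul_pow, div_pow, mul_div_assoc]; norm_num
      _ ≤ C := hC
  rw [hD.fderiv]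
  linarith [Real.le_sqrt_of_sq_le hsq]

namespace Complex

theorem not_sameRay_real_smul_I_mul {w : ℂ} (hw : w ≠ 0) {s : ℝ} (hs : s ≠ 0) :
    ¬SameRay ℝ (s • w) (I * w) := by
  intro h
  obtain ⟨r₁, r₂, -, hr₂, he⟩ := h.exists_pos (smul_ne_zero hs hw) (mul_ne_zero I_ne_zero hw)
  have hzero : ((r₁ * s : ℝ) - r₂ * I) * w = 0 := by
    simp only [real_smul] at he
    push_cast
    linear_combination he
  have := congrArg im ((mul_eq_zero.1 hzero).resolve_right hw)
  simp only [sub_im, ofReal_im, mul_im, ofReal_re, I_im, mul_one, I_re, mul_zero, add_zero,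
    zero_sub, zero_im, neg_eq_zero] at this
  exact hr₂.ne' this

theorem exists_avoiding_two_segment_path {c x y : ℂ} (hx : x ≠ c) (hy : y ≠ c) :
    ∃ m, ‖m - c‖ = ‖x - c‖ ∧ c ∉ segment ℝ x m ∧ c ∉ segment ℝ m y ∧
      dist x m + dist m y ≤ 3 * dist x y := by
  by_cases hxy : c ∈ segment ℝ x y
  · obtain ⟨a, rfl⟩ : ∃ a, x = c + a := ⟨x - c, by ring⟩
    have ha : a ≠ 0 := by simpa using hx
    rw [mem_segment_iff_sameRay, sub_add_cancel_left] at hxy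
    obtain ⟨t, ht, hyt⟩ := hxy.exists_pos_left (neg_ne_zero.2 ha) (sub_ne_zero.2 hy)
    obtain rfl : y = c - t • a := by rw [smul_neg] at hyt; linear_combination -hyt
    -- the detour goes through `x` rotated by a right angle about `c`
    refine ⟨c + I * a, by simp, ?_, ?_, ?_⟩
    · rw [mem_segment_iff_sameRay]
      simpa using not_sameRay_real_smul_I_mul ha (s := -1) (by norm_num)
    · rw [mem_segment_iff_sameRay, ← sameRay_neg_iff]
      simpa using fun h ↦ not_sameRay_real_smul_I_mul ha ht.ne' h.symm
    · have h1 : dist (c + a) (c + I * a) ≤ 2 * ‖a‖ := by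
        rw [dist_add_left, dist_eq_norm]
        calc ‖a - I * a‖ ≤ ‖a‖ + ‖I * a‖ := norm_sub_le _ _
          _ = 2 * ‖a‖ := by simp; ring
      have h2 : dist (c + I * a) (c - t • a) ≤ ‖a‖ + t * ‖a‖ := by
        rw [dist_eq_norm]
        calc ‖c + I * a - (c - t • a)‖ = ‖I * a + t • a‖ := by ring_nf
          _ ≤ ‖I * a‖ + ‖t • a‖ := norm_add_le _ _
          _ = ‖a‖ + t * ‖a‖ := by simp [ht.le]
      have h3 : dist (c + a) (c - t • a) = ‖a‖ + t * ‖a‖ := by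
        rw [dist_eq_norm, show c + a - (c - t • a) = (1 + t) • a by module, norm_smul,
          Real.norm_of_nonneg (by positivity)]
        ring
      nlinarith [norm_nonneg a]
  · refine ⟨x, rfl, by simpa using hx.symm, hxy, ?_⟩
    rw [dist_self, zero_add]
    linarith [dist_nonneg (x := x) (y := y)]

end Complex

theorem lipschitzOnWith_ball_diff_singleton_of_nnnorm_fderiv_le {E : Type*}
    [NormedAddCommGroup E] [NormedSpace ℝ E] {u : ℂ → E} {c : ℂ} {r : ℝ} {K : ℝ≥0}
    (hu : ∀ z ∈ ball c r \ {c}, DifferentiableAt ℝ u z)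
    (bound : ∀ z ∈ ball c r \ {c}, ‖fderiv ℝ u z‖₊ ≤ K) :
    LipschitzOnWith (3 * K) u (ball c r \ {c}) := by
  have hseg : ∀ x ∈ ball c r, ∀ y ∈ ball c r, c ∉ segment ℝ x y →
      dist (u x) (u y) ≤ K * dist x y := by
    intro x hx y hy hc
    have hsub : segment ℝ x y ⊆ ball c r \ {c} :=
      subset_sdiff.2 ⟨(convex_ball c r).segment_subset hx hy, disjoint_singleton_right.2 hc⟩
    exact ((convex_segment x y).lipschitzOnWith_of_nnnorm_fderiv_le (fun z hz ↦ hu z (hsub hz))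
      (fun z hz ↦ bound z (hsub hz))).dist_le_mul x (left_mem_segment ℝ x y) y
      (right_mem_segment ℝ x y)
  refine LipschitzOnWith.of_dist_le_mul fun x hx y hy ↦ ?_
  obtain ⟨m, hm, hxm, hmy, hlen⟩ := Complex.exists_avoiding_two_segment_path hx.2 hy.2
  have hmc : m ∈ ball c r := by rw [mem_ball, dist_eq_norm, hm, ← dist_eq_norm]; exact hx.1
  calc dist (u x) (u y) ≤ dist (u x) (u m) + dist (u m) (u y) := dist_triangle _ _ _
    _ ≤ K * dist x m + K * dist m y := add_le_add (hseg x hx.1 m hmc hxm) (hseg m hmc y hy.1 hmy)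
    _ ≤ K * (3 * dist x y) := by rw [← mul_add]; gcongr
    _ = ↑(3 * K) * dist x y := by push_cast; ring

theorem LipschitzOnWith.exists_tendsto_nhdsWithin {α : Type*} [PseudoMetricSpace α] {f : α → ℝ}
    {s : Set α} {K : ℝ≥0} (hf : LipschitzOnWith K f s) (a : α) :
    ∃ L, Tendsto f (𝓝[s] a) (𝓝 L) := by
  obtain ⟨g, hg, hfg⟩ := hf.extend_real
  exact ⟨g a, ((hg.continuous.tendsto a).mono_left nhdsWithin_le_nhds).congr'
    (eventuallyEq_nhdsWithin_of_eqOn hfg.symm)⟩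

theorem Filter.Tendsto.exists_tendsto_or_tendsto_atTop_of_inv_one_add_sq {α : Type*}
    {l : Filter α} [l.NeBot] {n : α → ℝ} {L : ℝ} (hn : ∀ a, 0 ≤ n a)
    (h : Tendsto (fun a ↦ (1 + n a ^ 2)⁻¹) l (𝓝 L)) :
    (∃ b, Tendsto n l (𝓝 b)) ∨ Tendsto n l atTop := by
  have hrecover : ∀ a, √((1 + n a ^ 2)⁻¹⁻¹ - 1) = n a := fun a ↦ by
    rw [inv_inv, add_sub_cancel_left, Real.sqrt_sq (hn a)]
  rcases (ge_of_tendsto' h fun a ↦ by positivity).eq_or_lt with rfl | hL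
  · have hpos : Tendsto (fun a ↦ (1 + n a ^ 2)⁻¹) l (𝓝[>] 0) :=
      tendsto_nhdsWithin_of_tendsto_nhds_of_eventually_within _ h
        (Eventually.of_forall fun a ↦ by simp only [mem_Ioi]; positivity)
    exact .inr <| (Real.tendsto_sqrt_atTop.comp
      (tendsto_atTop_add_const_right _ (-1) hpos.inv_tendsto_nhdsGT_zero)).congr hrecover
  · exact .inl ⟨_, (((h.inv₀ hL.ne').sub_const 1).sqrt).congr hrecover⟩

namespace Complex

section RemovableSingularity

variable {E : Type*} [NormedAddCommGroup E] [NormedSpace ℂ E] [CompleteSpace E] {f : ℂ → E}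
  {c : ℂ}

theorem exists_tendsto_of_isBoundedUnder (hd : ∀ᶠ z in 𝓝[≠] c, DifferentiableAt ℂ f z)
    (hb : IsBoundedUnder (· ≤ ·) (𝓝[≠] c) fun z ↦ ‖f z‖) :
    ∃ a, Tendsto f (𝓝[≠] c) (𝓝 a) := by
  obtain ⟨M, hM⟩ := hb
  refine ⟨_, tendsto_limUnder_of_differentiable_on_punctured_nhds_of_bounded_under hd
    ⟨M + ‖f c‖, eventually_map.2 ((eventually_map.1 hM).mono fun z hz ↦ ?_)⟩⟩
  exact (norm_sub_le _ _).trans (by gcongr)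

theorem meromorphicAt_of_isBoundedUnder (hd : ∀ᶠ z in 𝓝[≠] c, DifferentiableAt ℂ f z)
    (hb : IsBoundedUnder (· ≤ ·) (𝓝[≠] c) fun z ↦ ‖f z‖) : MeromorphicAt f c := by
  refine ⟨1, analyticAt_of_differentiable_on_punctured_nhds_of_continuousAt ?_ ?_⟩
  · filter_upwards [hd] with z hz
    exact ((differentiableAt_id.sub_const c).pow 1).smul hz
  · rw [← continuousWithinAt_compl_self, ContinuousWithinAt, sub_self, zero_pow one_ne_zero,
      zero_smul]
    have hz : Tendsto (fun z : ℂ ↦ (z - c) ^ 1) (𝓝[≠] c) (𝓝 0) := by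
      simpa using tendsto_nhdsWithin_of_tendsto_nhds ((continuous_sub_right c).tendsto c)
    exact hz.zero_smul_isBoundedUnder_le hb

end RemovableSingularity

theorem meromorphicAt_of_tendsto_norm_atTop {f : ℂ → ℂ} {c : ℂ}
    (hd : ∀ᶠ z in 𝓝[≠] c, DifferentiableAt ℂ f z) (h : Tendsto (‖f ·‖) (𝓝[≠] c) atTop) :
    MeromorphicAt f c := by
  have hone : ∀ᶠ z in 𝓝[≠] c, 1 ≤ ‖f z‖ := h.eventually_ge_atTop 1
  have hinv : MeromorphicAt f⁻¹ c := by
    refine meromorphicAt_of_isBoundedUnder ?_ ⟨1, eventually_map.2 ?_⟩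
    · filter_upwards [hd, hone] with z hz hz1
      exact hz.inv (norm_pos_iff.1 (one_pos.trans_le hz1))
    · filter_upwards [hone] with z hz1
      simpa using inv_le_one_of_one_le₀ hz1
  simpa using hinv.inv

end Complex

/-- If the density ρ_f = 4|f′|²/(1+|f|²)² of a function f, holomorphic on a punctured
disc, is bounded near the puncture, then the singularity is removable or a pole;
in particular f is meromorphic at the puncture. -/
theorem bounded_density_implies_meromorphic (z₀ : ℂ) (r : ℝ) (hr : 0 < r)
    (f : ℂ → ℂ) (hf : DifferentiableOn ℂ f (Metric.ball z₀ r \ {z₀}))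
    (C : ℝ)
    (hbound : ∀ z ∈ Metric.ball z₀ r \ {z₀},
      4 * ‖deriv f z‖ ^ 2 / (1 + ‖f z‖ ^ 2) ^ 2 ≤ C) :
    ((∃ c : ℂ, Filter.Tendsto f (nhdsWithin z₀ {z₀}ᶜ) (nhds c)) ∨
      Filter.Tendsto (fun z => ‖f z‖) (nhdsWithin z₀ {z₀}ᶜ) Filter.atTop) ∧
    MeromorphicAt f z₀ := by
  have hdiff : ∀ z ∈ ball z₀ r \ {z₀}, DifferentiableAt ℂ f z := fun z hz ↦
    hf.differentiableAt ((isOpen_ball.sdiff isClosed_singleton).mem_nhds hz)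
  have hsph := fun z hz ↦ (hdiff z hz).norm_fderiv_inv_one_add_norm_sq_le_sqrt (hbound z hz)
  have hlip := lipschitzOnWith_ball_diff_singleton_of_nnnorm_fderiv_le (K := (√C / 2).toNNReal)
    (fun z hz ↦ (hsph z hz).1) fun z hz ↦ by
      rw [← norm_toNNReal]; exact Real.toNNReal_le_toNNReal (hsph z hz).2
  have hnhds : 𝓝[ball z₀ r \ {z₀}] z₀ = 𝓝[≠] z₀ :=
    nhdsWithin_inter_of_mem (mem_nhdsWithin_of_mem_nhds (ball_mem_nhds z₀ hr))
  obtain ⟨L, hL⟩ := hlip.exists_tendsto_nhdsWithin z₀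
  rw [hnhds] at hL
  have hd : ∀ᶠ z in 𝓝[≠] z₀, DifferentiableAt ℂ f z := hnhds ▸ eventually_mem_nhdsWithin.mono hdiff
  rcases hL.exists_tendsto_or_tendsto_atTop_of_inv_one_add_sq (fun _ ↦ norm_nonneg _) with
    ⟨b, hb⟩ | htop
  · exact ⟨.inl (Complex.exists_tendsto_of_isBoundedUnder hd hb.isBoundedUnder_le),
      Complex.meromorphicAt_of_isBoundedUnder hd hb.isBoundedUnder_le⟩
  · exact ⟨.inr htop, Complex.meromorphicAt_of_tendsto_norm_atTop hd htop⟩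
end

section
/- If γ₁, γ₂ ∈ SU(2) anticommute (γ₁γ₂ = −γ₂γ₁), then there exists U ∈ SU(2) and λ ∈ ℂ with |λ| = 1 such that γ₁ = U† diag(−i, i) U and γ₂ = U† [[0, −λ],[λ⁻¹, 0]] U. -/
/-!
Since `γ₂ γ₁ γ₂⁻¹ = -γ₁`, the matrix `γ₁` is traceless, so `γ₁² = D² = -1` for `D = diag(-i, i)`.
Then `V = 1 - D γ₁` satisfies `V γ₁ = γ₁ + D = D V`, and `V` has the SU(2) shape
`!![p, q; -q̄, p̄]`, so a real multiple of it lies in SU(2) unless `V = 0`, i.e. `γ₁ = -D`.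
Conjugating by this `U`, the image of `γ₂` is an SU(2) matrix anticommuting with `D`; its diagonal
vanishes, which forces the form `!![0, -λ; λ⁻¹, 0]` with `|λ| = 1`.
-/

open Complex Matrix

theorem Matrix.trace_eq_zero_of_mul_eq_neg_mul {m α : Type*} [Fintype m] [DecidableEq m]
    [CommRing α] [IsAddTorsionFree α] {A B : Matrix m m α} (hA : IsUnit A)
    (h : A * B = -(B * A)) : trace B = 0 := by
  have hconj : A * B * A⁻¹ = -B := by
    rw [h, neg_mul, mul_assoc, mul_nonsing_inv _ ((isUnit_iff_isUnit_det A).mp hA), mul_one]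
  rw [← neg_eq_self, ← trace_neg, ← hconj, trace_conj hA]

theorem Matrix.mem_specialUnitaryGroup_fin_two_iff {α : Type*} [CommRing α] [StarRing α]
    {A : Matrix (Fin 2) (Fin 2) α} :
    A ∈ specialUnitaryGroup (Fin 2) α ↔
      ∃ a b : α, a * star a + b * star b = 1 ∧ A = !![a, b; -star b, star a] := by
  rw [mem_specialUnitaryGroup_iff, mem_unitaryGroup_iff']
  constructor
  · rintro ⟨hU, hdet⟩
    have hadj : A * adjugate A = 1 := by rw [mul_adjugate, hdet, one_smul]
    have hstar : star A = adjugate A := by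
      rw [← inv_eq_left_inv hU, inv_eq_right_inv hadj]
    have h11 : A 1 1 = star (A 0 0) := by
      simpa [adjugate_fin_two] using (congrFun₂ hstar 0 0).symm
    have h10 : A 1 0 = -star (A 0 1) := by
      simpa [adjugate_fin_two] using congrArg star (congrFun₂ hstar 0 1)
    refine ⟨A 0 0, A 0 1, ?_, ?_⟩
    · rw [det_fin_two, h11, h10] at hdet
      linear_combination hdet
    · ext i j
      fin_cases i <;> fin_cases j <;> simp [h11, h10]
  · rintro ⟨a, b, hab, rfl⟩
    refine ⟨?_, by simp [det_fin_two_of, hab]⟩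
    ext i j
    fin_cases i <;> fin_cases j <;> simp [mul_apply, Fin.sum_univ_two]
    · rw [mul_comm]; exact hab
    · rw [mul_comm, add_neg_cancel]
    · rw [mul_comm, add_neg_cancel]
    · rw [mul_comm, add_comm]; exact hab

namespace Complex

theorem ofReal_smul_mem_specialUnitaryGroup_fin_two {p q : ℂ} {c : ℝ}
    (hc : c ^ 2 * (normSq p + normSq q) = 1) :
    (c : ℂ) • !![p, q; -star q, star p] ∈ specialUnitaryGroup (Fin 2) ℂ := by
  refine mem_specialUnitaryGroup_fin_two_iff.mpr ⟨c * p, c * q, ?_, ?_⟩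
  · simp only [star_mul', star_def, conj_ofReal]
    linear_combination (norm := skip) (congrArg ((↑) : ℝ → ℂ) hc)
    push_cast
    rw [← mul_conj, ← mul_conj]
    ring
  · ext i j
    fin_cases i <;> fin_cases j <;> simp [star_mul']

theorem exists_specialUnitaryGroup_mul_eq_diag_mul {a b : ℂ}
    (hab : a * star a + b * star b = 1) (ha : star a = -a) :
    ∃ U ∈ specialUnitaryGroup (Fin 2) ℂ,
      U * !![a, b; -star b, star a] = !![-I, 0; 0, I] * U := by
  rw [ha] at hab ⊢
  set s := normSq (1 + I * a) + normSq (I * b)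
  by_cases hs : s = 0
  · obtain ⟨hp, hq⟩ := (add_eq_zero_iff_of_nonneg (normSq_nonneg _) (normSq_nonneg _)).mp hs
    rw [normSq_eq_zero] at hp hq
    obtain rfl : b = 0 := (mul_eq_zero.mp hq).resolve_left I_ne_zero
    obtain rfl : a = I := by linear_combination -I * hp + a * I_sq
    refine ⟨!![0, 1; -1, 0], mem_specialUnitaryGroup_fin_two_iff.mpr ⟨0, 1, by simp, by simp⟩, ?_⟩
    ext i j
    fin_cases i <;> fin_cases j <;> simp
  · -- the first factor is `1 - D A` with `D = diag(-i, i)`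
    have hV : !![1 + I * a, I * b; -star (I * b), star (1 + I * a)] * !![a, b; -star b, -a] =
        !![-I, 0; 0, I] * !![1 + I * a, I * b; -star (I * b), star (1 + I * a)] := by
      rw [star_def] at hab ha
      ext i j
      fin_cases i <;> fin_cases j <;> simp [ha]
      · linear_combination -I * hab + a * I_sq
      · linear_combination b * I_sq
      · linear_combination -starRingEnd ℂ b * I_sq
      · linear_combination I * hab - a * I_sq
    have hc : (√s)⁻¹ ^ 2 * s = 1 := by
      rw [inv_pow, Real.sq_sqrt (add_nonneg (normSq_nonneg _) (normSq_nonneg _)),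
        inv_mul_cancel₀ hs]
    exact ⟨_, ofReal_smul_mem_specialUnitaryGroup_fin_two hc,
      by rw [smul_mul, hV, Matrix.mul_smul]⟩

theorem exists_specialUnitaryGroup_eq_conj_diag_of_trace_eq_zero
    {A : Matrix (Fin 2) (Fin 2) ℂ} (hA : A ∈ specialUnitaryGroup (Fin 2) ℂ) (htr : trace A = 0) :
    ∃ U ∈ specialUnitaryGroup (Fin 2) ℂ, A = Uᴴ * !![-I, 0; 0, I] * U := by
  obtain ⟨a, b, hab, rfl⟩ := mem_specialUnitaryGroup_fin_two_iff.mp hA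
  have ha : star a = -a := eq_neg_of_add_eq_zero_right (by simpa [trace_fin_two_of] using htr)
  obtain ⟨U, hU, hUA⟩ := exists_specialUnitaryGroup_mul_eq_diag_mul hab ha
  refine ⟨U, hU, ?_⟩
  rw [mul_assoc, ← hUA, ← mul_assoc, ← star_eq_conjTranspose,
    mem_unitaryGroup_iff'.mp hU.1, one_mul]

theorem exists_eq_offDiag_of_mul_diag_eq_neg {M : Matrix (Fin 2) (Fin 2) ℂ}
    (hM : M ∈ specialUnitaryGroup (Fin 2) ℂ)
    (h : M * !![-I, 0; 0, I] = -(!![-I, 0; 0, I] * M)) :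
    ∃ lam : ℂ, ‖lam‖ = 1 ∧ M = !![0, -lam; lam⁻¹, 0] := by
  obtain ⟨a, b, hab, rfl⟩ := mem_specialUnitaryGroup_fin_two_iff.mp hM
  obtain rfl : a = 0 := by
    simpa [mul_comm, neg_eq_iff_add_eq_zero, ← two_mul, I_ne_zero] using congrFun₂ h 0 0
  rw [zero_mul, zero_add] at hab
  refine ⟨-b, ?_, ?_⟩
  · have hsq : (‖b‖ : ℂ) ^ 2 = 1 := by rw [← mul_conj', ← star_def, hab]
    rw [norm_neg]
    exact (pow_eq_one_iff_of_nonneg (norm_nonneg b) two_ne_zero).mp (by exact_mod_cast hsq)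
  · rw [inv_neg, neg_neg, ← eq_inv_of_mul_eq_one_right hab, star_zero]

end Complex

/-- Anticommuting elements of SU(2) can simultaneously be brought into the normal
form diag(−i,i) and [[0,−λ],[λ⁻¹,0]] with |λ| = 1, by a common SU(2) conjugation. -/
theorem anticommuting_SU2_normal_form
    (γ₁ γ₂ : Matrix.specialUnitaryGroup (Fin 2) ℂ)
    (h : (γ₁ : Matrix (Fin 2) (Fin 2) ℂ) * (γ₂ : Matrix (Fin 2) (Fin 2) ℂ) =
        -((γ₂ : Matrix (Fin 2) (Fin 2) ℂ) * (γ₁ : Matrix (Fin 2) (Fin 2) ℂ))) :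
    ∃ U ∈ Matrix.specialUnitaryGroup (Fin 2) ℂ, ∃ lam : ℂ, ‖lam‖ = 1 ∧
      (γ₁ : Matrix (Fin 2) (Fin 2) ℂ) = Uᴴ * !![(-I), 0; 0, I] * U ∧
      (γ₂ : Matrix (Fin 2) (Fin 2) ℂ) = Uᴴ * !![0, (-lam); lam⁻¹, 0] * U := by
  have hunit : IsUnit (γ₂ : Matrix (Fin 2) (Fin 2) ℂ) :=
    IsUnit.of_mul_eq_one _ (mem_unitaryGroup_iff.mp γ₂.2.1)
  have htr : trace (γ₁ : Matrix (Fin 2) (Fin 2) ℂ) = 0 :=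
    trace_eq_zero_of_mul_eq_neg_mul hunit (by rw [h, neg_neg])
  obtain ⟨U, hU, hγ₁⟩ := exists_specialUnitaryGroup_eq_conj_diag_of_trace_eq_zero γ₁.2 htr
  let u : specialUnitaryGroup (Fin 2) ℂ := ⟨U, hU⟩
  let φ := Unitary.conjStarAlgAut ℂ _ (⟨U, hU.1⟩ : unitary (Matrix (Fin 2) (Fin 2) ℂ))
  have hφ : ∀ X, φ.symm X = Uᴴ * X * U := fun X => rfl
  have hD : φ γ₁ = !![-I, 0; 0, I] := by rw [hγ₁, ← hφ, φ.apply_symm_apply]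
  have hmem : φ γ₂ ∈ specialUnitaryGroup (Fin 2) ℂ := (u * γ₂ * u⁻¹).2
  have hanti : φ γ₂ * !![-I, 0; 0, I] = -(!![-I, 0; 0, I] * φ γ₂) := by
    rw [← hD, ← map_mul, ← map_mul, ← map_neg, h, neg_neg]
  obtain ⟨lam, hlam, hN⟩ := exists_eq_offDiag_of_mul_diag_eq_neg hmem hanti
  exact ⟨U, hU, lam, hlam, hγ₁, by rw [← hN, ← hφ, φ.symm_apply_apply]⟩
end
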